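/- arXiv:2601.19879 — 10 statements merged into one kernel-verified Lean document; each statement's English description precedes it below -/
import Mathlib

section
/- Let k ≥ 1 and let f be a polynomial with integer coefficients. Then the sum over i from 0 to k-1 of (-1)^i * C(k-1, i) * (f(x) - i)^k equals k! * f(x) - k!(k-1)/2, as an identity of polynomials. -/
/-!
Substituting `i ↦ k - 1 - i` turns the left side into the `(k - 1)`-st forward difference of
`y ↦ y ^ k` at `y = f - (k - 1)`. Since `Δ (y ^ (n + 2)) = (n + 2) y ^ (n + 1) + C(n + 2, 2) y ^ n`
plus terms of degree `< n`, which `Δ^[n]` kills, induction on `n` gives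
`Δ^[n] (y ^ (n + 1)) = (n + 1)! y + C(n + 1, 2) n!` over any commutative ring.
-/

open Finset Nat Function
open scoped fwdDiff

variable {R : Type*} [CommRing R]

theorem cast_add_one_choose_two_mul_two (n : ℕ) : ((n + 1).choose 2 : R) * 2 = (n + 1) * n := by
  have h : (n + 1).choose 2 * 2 = (n + 1) * n := by
    simpa using (add_one_mul_choose_eq n 1).symm
  simpa using congrArg (Nat.cast : ℕ → R) h

theorem fwdDiff_pow_add_two (n : ℕ) :
    Δ_[1] (fun r : R ↦ r ^ (n + 2)) =
      ((n + 2 : R) • fun r ↦ r ^ (n + 1)) + ((n + 2).choose 2 : R) • (fun r ↦ r ^ n) +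
        fun r ↦ ∑ k ∈ range n, ((n + 2).choose k : R) * r ^ k := by
  ext r
  simp only [fwdDiff, add_pow, one_pow, mul_one, sum_range_succ, choose_succ_self_right, cast_add,
    cast_one, mul_comm, choose_self, one_mul, add_sub_cancel_right, Pi.add_apply, Pi.smul_apply,
    smul_eq_mul]
  rw [choose_symm_add]
  ring

theorem fwdDiff_iter_pow_succ (n : ℕ) :
    (Δ_[1])^[n] (fun r : R ↦ r ^ (n + 1)) =
      fun r ↦ ((n + 1)! : R) * r + ((n + 1).choose 2 : R) * n ! := by
  induction n with
  | zero => ext r; simp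
  | succ n ih =>
    rw [iterate_succ_apply, fwdDiff_pow_add_two, fwdDiff_iter_add, fwdDiff_iter_add,
      fwdDiff_iter_const_smul, fwdDiff_iter_const_smul, ih, fwdDiff_iter_eq_factorial,
      fwdDiff_iter_sum_mul_pow_eq_zero]
    ext r
    simp only [Pi.add_apply, Pi.smul_apply, Pi.zero_apply, Pi.natCast_apply, smul_eq_mul]
    push_cast [factorial_succ, choose_succ_succ' (n + 1) 1, choose_one_right]
    linear_combination (n ! : R) * cast_add_one_choose_two_mul_two (R := R) n

theorem sum_alternating_choose_mul_sub_pow_succ (m : ℕ) (y : R) :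
    ∑ i ∈ range (m + 1), (-1) ^ i * (m.choose i : R) * (y - i) ^ (m + 1) =
      (m + 1)! * y - (m + 1).choose 2 * m ! := by
  have h := congrFun (fwdDiff_iter_pow_succ (R := R) m) (y - m)
  rw [fwdDiff_iter_eq_sum_shift, ← sum_range_reflect] at h
  calc ∑ i ∈ range (m + 1), (-1) ^ i * (m.choose i : R) * (y - i) ^ (m + 1)
      = (m + 1)! * (y - m) + (m + 1).choose 2 * m ! := by
        rw [← h]
        refine sum_congr rfl fun i hi ↦ ?_
        have hi : i ≤ m := mem_range_succ_iff.mp hi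
        rw [add_tsub_cancel_right, Nat.sub_sub_self hi, choose_symm hi, nsmul_one,
          Nat.cast_sub hi, zsmul_eq_mul]
        push_cast
        ring
    _ = (m + 1)! * y - (m + 1).choose 2 * m ! := by
        push_cast [factorial_succ]
        linear_combination (m ! : R) * cast_add_one_choose_two_mul_two (R := R) m

/-- Proposition (shifted k-th power sum identity): for `k ≥ 1` and `f ∈ ℤ[x]`,
`∑_{i=0}^{k-1} (-1)^i * C(k-1,i) * (f(x)-i)^k = k! * f(x) - k!(k-1)/2` in `ℚ[x]`. -/
theorem stmt_0 (k : ℕ) (hk : 1 ≤ k) (f : Polynomial ℤ) :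
    ∑ i ∈ Finset.range k,
        (-1 : Polynomial ℚ) ^ i * (Nat.choose (k - 1) i : Polynomial ℚ) *
          (f.map (Int.castRingHom ℚ) - (i : Polynomial ℚ)) ^ k
      = (Nat.factorial k : Polynomial ℚ) * f.map (Int.castRingHom ℚ)
        - Polynomial.C ((Nat.factorial k : ℚ) * ((k : ℚ) - 1) / 2) := by
  obtain ⟨m, rfl⟩ := Nat.exists_eq_add_of_le' hk
  rw [add_tsub_cancel_right, sum_alternating_choose_mul_sub_pow_succ]
  congr 1
  rw [← Polynomial.C_eq_natCast, ← Polynomial.C_eq_natCast, ← Polynomial.C_mul]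
  congr 1
  push_cast [cast_choose_two, factorial_succ]
  ring
end

section
/- Let q = q_0^k be a prime power and N: F_q → F_{q_0} the relative norm. Let t_1, ..., t_{k-1} ∈ F_{q_0} be pairwise distinct elements not in {0, 1}, set t_k = 1, and let A_i = ∏_{j≠i} t_j/(t_j - t_i). Then for every μ ∈ F_q, ∑_{i=1}^k A_i * N(1 + μ t_i) = 1 + c * N(μ), where c = (-1)^{k+1} ∏_{i=1}^k t_i is a nonzero element of F_{q_0}. -/
/-!
For `t` in the subfield of order `q₀`, Frobenius gives `N(1 + μ t) = ∏_{j<k} (1 + μ^{q₀^j} t)`,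
a polynomial in `t` of degree `k` with constant term `1` and leading coefficient `N(μ)`.
The weights `A_i` are the values at `0` of the Lagrange basis on the nodes `t_i`, so
`∑ A_i p(t_i) = p(0)` when `deg p < k`; applying this to `p - a_k ∏ (X - t_i)` shows that
a polynomial of degree `k` with leading coefficient `a_k` picks up the extra term
`a_k (-1)^{k+1} ∏ t_i`.
-/

open Polynomial Finset Function

section Lagrange

variable {F ι : Type*} [Field F] [Fintype ι] [DecidableEq ι] {t : ι → F}

theorem Lagrange.eval_zero_basis_univ (i : ι) :
    (Lagrange.basis univ t i).eval 0 = ∏ j ∈ univ.erase i, t j / (t j - t i) := by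
  rw [Lagrange.basis, eval_prod]
  refine prod_congr rfl fun j _ => ?_
  rw [Lagrange.basisDivisor, eval_mul, eval_C, eval_sub, eval_X, eval_C, ← neg_sub, inv_neg]
  ring

theorem eval_zero_eq_sum_mul_eval_of_degree_lt (ht : Injective t) {p : F[X]}
    (hp : p.degree < Fintype.card ι) :
    p.eval 0 = ∑ i, (∏ j ∈ univ.erase i, t j / (t j - t i)) * p.eval (t i) := by
  conv_lhs => rw [Lagrange.eq_interpolate (f := p) ht.injOn (by rwa [card_univ])]
  simp only [Lagrange.interpolate_apply, eval_finsetSum, eval_mul, eval_C,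
    Lagrange.eval_zero_basis_univ, mul_comm]

theorem sum_mul_eval_of_natDegree_le (ht : Injective t) {p : F[X]}
    (hp : p.natDegree ≤ Fintype.card ι) :
    ∑ i, (∏ j ∈ univ.erase i, t j / (t j - t i)) * p.eval (t i)
      = p.eval 0 + p.coeff (Fintype.card ι) * ((-1) ^ (Fintype.card ι + 1) * ∏ i, t i) := by
  set Q : F[X] := ∏ i, (X - C (t i))
  have hQ_monic : Q.Monic := monic_prod_of_monic _ _ fun i _ => monic_X_sub_C (t i)
  have hQ_natDegree : Q.natDegree = Fintype.card ι := by simp [Q]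
  have hQ_node (i : ι) : Q.eval (t i) = 0 := by
    simp [Q, eval_prod, prod_eq_zero (mem_univ i)]
  have hQ_zero : Q.eval 0 = (-1) ^ Fintype.card ι * ∏ i, t i := by
    simp [Q, eval_prod, prod_neg]
  have hr : (p - C (p.coeff (Fintype.card ι)) * Q).degree < Fintype.card ι := by
    refine (degree_lt_iff_coeff_zero _ _).mpr fun m hm => ?_
    rcases hm.lt_or_eq with hlt | rfl
    · rw [coeff_sub, coeff_C_mul, coeff_eq_zero_of_natDegree_lt (hp.trans_lt hlt),
        coeff_eq_zero_of_natDegree_lt (hQ_natDegree.trans_lt hlt), mul_zero, sub_zero]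
    · rw [coeff_sub, coeff_C_mul, ← hQ_natDegree, hQ_monic.coeff_natDegree, mul_one, sub_self]
  have hsum := eval_zero_eq_sum_mul_eval_of_degree_lt ht hr
  simp only [eval_sub, eval_mul, eval_C, hQ_node, mul_zero, sub_zero, hQ_zero] at hsum
  rw [← hsum, pow_succ]
  ring

end Lagrange

section LinearFactors

variable {R α : Type*} [CommSemiring R] (s : Finset α) (a : α → R)

theorem natDegree_prod_C_mul_X_add_one_le :
    (∏ j ∈ s, (C (a j) * X + C 1)).natDegree ≤ #s :=
  (natDegree_prod_le _ _).trans <| (sum_le_sum fun _ _ => natDegree_linear_le).trans_eq <| by simp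

theorem coeff_prod_C_mul_X_add_one_card :
    (∏ j ∈ s, (C (a j) * X + C 1)).coeff #s = ∏ j ∈ s, a j := by
  simpa [coeff_one] using coeff_prod_of_natDegree_le s (fun j => C (a j) * X + C 1) 1
    fun _ _ => natDegree_linear_le

theorem eval_zero_prod_C_mul_X_add_one : (∏ j ∈ s, (C (a j) * X + C 1)).eval 0 = 1 := by
  simp [eval_prod]

end LinearFactors

section Frobenius

variable {F : Type*} [Field F] [Fintype F] {q₀ k : ℕ}

theorem add_pow_pow_of_card_eq_pow (hq₀ : IsPrimePow q₀) (hcard : Fintype.card F = q₀ ^ k)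
    (x y : F) (j : ℕ) : (x + y) ^ q₀ ^ j = x ^ q₀ ^ j + y ^ q₀ ^ j := by
  obtain ⟨p, s, hp, -, rfl⟩ := hq₀
  have : Fact p.Prime := ⟨Nat.prime_iff.mpr hp⟩
  have : CharP F p := charP_of_card_eq_prime_pow (hcard.trans (pow_mul p s k).symm)
  rw [← pow_mul]
  exact add_pow_char_pow x y p (s * j)

theorem pow_pow_eq_self_of_pow_eq_self {M : Type*} [Monoid M] {x : M} {n : ℕ} (h : x ^ n = x)
    (j : ℕ) : x ^ n ^ j = x := by
  induction j with
  | zero => simp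
  | succ j ih => rw [pow_succ, pow_mul, ih, h]

theorem prod_one_add_mul_pow_pow_eq_eval (hq₀ : IsPrimePow q₀)
    (hcard : Fintype.card F = q₀ ^ k) (μ : F) {t : F} (ht : t ^ q₀ = t) :
    ∏ j ∈ range k, (1 + μ * t) ^ q₀ ^ j
      = (∏ j ∈ range k, (C (μ ^ q₀ ^ j) * X + C 1)).eval t := by
  rw [eval_prod]
  refine prod_congr rfl fun j _ => ?_
  rw [add_pow_pow_of_card_eq_pow hq₀ hcard, mul_pow, pow_pow_eq_self_of_pow_eq_self ht]
  simp [add_comm]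

end Frobenius

section Nodes

variable {k : ℕ}

theorem Fin.val_lt_pred_or_eq (hk : 0 < k) (i : Fin k) :
    (i : ℕ) < k - 1 ∨ i = ⟨k - 1, by omega⟩ :=
  (Nat.lt_or_ge i (k - 1)).imp_right fun h => Fin.ext (show (i : ℕ) = k - 1 by omega)

theorem injective_of_apply_pred_eq_one {M : Type*} [One M] (hk : 0 < k) {t : Fin k → M}
    (hlast : t ⟨k - 1, by omega⟩ = 1)
    (hdist : ∀ i j : Fin k, (i : ℕ) < k - 1 → (j : ℕ) < k - 1 → i ≠ j → t i ≠ t j)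
    (hne : ∀ i : Fin k, (i : ℕ) < k - 1 → t i ≠ 1) : Injective t := by
  intro i j hij
  by_contra h
  rcases Fin.val_lt_pred_or_eq hk i with hi | rfl <;>
    rcases Fin.val_lt_pred_or_eq hk j with hj | rfl
  · exact hdist i j hi hj h hij
  · exact hne i hi (hij.trans hlast)
  · exact hne j hj (hij.symm.trans hlast)
  · exact h rfl

end Nodes

/-- Norm cancellation: let `F` be a finite field with `|F| = q₀^k` and
`N(x) = ∏_{j<k} x^{q₀^j}` the norm to the subfield of order `q₀`. Let
`t₁, …, t_{k-1}` be pairwise distinct elements of the subfield not in `{0,1}`,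
`t_k = 1`, and `A_i = ∏_{j≠i} t_j/(t_j - t_i)`. Then for every `μ ∈ F`,
`∑_i A_i N(1 + μ t_i) = 1 + c N(μ)` where `c = (-1)^{k+1} ∏ t_i ≠ 0`. -/
theorem stmt_5 (F : Type*) [Field F] [Fintype F] (q0 k : ℕ) (hq0 : IsPrimePow q0)
    (hk : 2 ≤ k) (hcard : Fintype.card F = q0 ^ k)
    (t : Fin k → F)
    (hsub : ∀ i, t i ^ q0 = t i)
    (hlast : t ⟨k - 1, by omega⟩ = 1)
    (hdist : ∀ i j : Fin k, (i : ℕ) < k - 1 → (j : ℕ) < k - 1 → i ≠ j → t i ≠ t j)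
    (hne : ∀ i : Fin k, (i : ℕ) < k - 1 → t i ≠ 0 ∧ t i ≠ 1)
    (A : Fin k → F)
    (hA : ∀ i, A i = ∏ j ∈ Finset.univ.erase i, t j / (t j - t i))
    (c : F) (hc : c = (-1 : F) ^ (k + 1) * ∏ i, t i) :
    (∀ μ : F,
        ∑ i, A i * ∏ j ∈ Finset.range k, (1 + μ * t i) ^ (q0 ^ j)
          = 1 + c * ∏ j ∈ Finset.range k, μ ^ (q0 ^ j)) ∧
    c ≠ 0 := by
  have hk₀ : 0 < k := by omega
  have hinj := injective_of_apply_pred_eq_one hk₀ hlast hdist fun i hi => (hne i hi).2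
  refine ⟨fun μ => ?_, ?_⟩
  · set P := ∏ j ∈ range k, (C (μ ^ q0 ^ j) * X + C 1)
    have hP : P.natDegree ≤ Fintype.card (Fin k) := by
      simpa only [card_range, Fintype.card_fin] using
        natDegree_prod_C_mul_X_add_one_le (range k) (fun j => μ ^ q0 ^ j)
    have hPk : P.coeff k = ∏ j ∈ range k, μ ^ q0 ^ j := by
      simpa only [card_range] using coeff_prod_C_mul_X_add_one_card (range k) (fun j => μ ^ q0 ^ j)
    simp only [hA, prod_one_add_mul_pow_pow_eq_eval hq0 hcard μ (hsub _)]
    rw [sum_mul_eval_of_natDegree_le hinj hP, Fintype.card_fin, hc,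
      eval_zero_prod_C_mul_X_add_one, hPk]
    ring
  · have hne₀ (i : Fin k) : t i ≠ 0 := by
      rcases Fin.val_lt_pred_or_eq hk₀ i with hi | rfl
      · exact (hne i hi).1
      · exact hlast ▸ one_ne_zero
    rw [hc]
    exact mul_ne_zero (pow_ne_zero _ (neg_ne_zero.mpr one_ne_zero))
      (prod_ne_zero_iff.mpr fun i _ => hne₀ i)
end

section
/- If N ⊆ F_q^d is a weak Nikodym set, then N × F_q ⊆ F_q^{d+1} is a Nikodym set. -/
/-- `N` is a Nikodym set: through every point there is a punctured line inside `N`. -/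
def IsNikodym (F V : Type*) [Field F] [AddCommGroup V] [Module F V] (N : Set V) : Prop :=
  ∀ x : V, ∃ v : V, v ≠ 0 ∧ ∀ t : F, t ≠ 0 → x + t • v ∈ N

/-- `N` is a weak Nikodym set: through every point outside `N` there is a punctured
line inside `N`. -/
def IsWeakNikodym (F V : Type*) [Field F] [AddCommGroup V] [Module F V] (N : Set V) : Prop :=
  ∀ x : V, x ∉ N → ∃ v : V, v ≠ 0 ∧ ∀ t : F, t ≠ 0 → x + t • v ∈ N

theorem IsWeakNikodym.prod_univ {F V W : Type*} [Field F] [AddCommGroup V] [Module F V]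
    [AddCommGroup W] [Module F W] [Nontrivial W] {N : Set V} (hN : IsWeakNikodym F V N) :
    IsNikodym F (V × W) (N ×ˢ Set.univ) := by
  rintro ⟨a, b⟩
  by_cases ha : a ∈ N
  · obtain ⟨w, hw⟩ := exists_ne (0 : W)
    exact ⟨(0, w), by simp [hw], fun t _ => by simpa using ha⟩
  · obtain ⟨v, hv, hline⟩ := hN a ha
    exact ⟨(v, 0), by simp [hv], fun t ht => by simpa using hline t ht⟩

/-- If `N ⊆ F_q^d` is a weak Nikodym set, then `N × F_q ⊆ F_q^{d+1}` is a Nikodym set. -/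
theorem stmt_9 (F : Type*) [Field F] (d : ℕ) (N : Set (Fin d → F))
    (hN : IsWeakNikodym F (Fin d → F) N) :
    IsNikodym F ((Fin d → F) × F) (N ×ˢ (Set.univ : Set F)) :=
  hN.prod_univ
end

section
/- Let q be a prime power with characteristic ≡ 1 mod 4, and let I ⊆ F_q be a set such that no difference of two distinct elements of I is a nonzero square in F_q. Then the set P = {(x,y) ∈ F_q^2 : x + y^2 ∈ I}, together with the lines ℓ_{x,y} = {(x - 2λy, y + λ) : λ ∈ F_q}, forms an induced matching of size q·|I| in the point-line incidence graph of F_q^2; i.e., each line ℓ_{x,y} meets P only in the point (x,y). -/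
open Finset

/-! Moving along `ℓ_{x,y}` by `λ` raises `x + y²` by exactly `λ²`, so a second point of `P` on
the line would give two elements of `I` differing by the nonzero square `λ²`. The count comes
from the shear `(x, y) ↦ (y, x + y²)`, which maps `P` bijectively onto `F × I`. -/

theorem sub_two_mul_mul_add_add_sq {R : Type*} [CommRing R] (x y l : R) :
    x - 2 * l * y + (y + l) ^ 2 = x + y ^ 2 + l ^ 2 := by
  ring

theorem eq_zero_of_mem_of_add_sq_mem {R : Type*} [CommRing R] [NoZeroDivisors R] {I : Finset R}
    (hI : ∀ a ∈ I, ∀ b ∈ I, a ≠ b → ∀ s : R, s ≠ 0 → a - b ≠ s ^ 2)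
    {t l : R} (ht : t ∈ I) (htl : t + l ^ 2 ∈ I) : l = 0 := by
  by_contra hl
  have hne : t + l ^ 2 ≠ t := by simpa using hl
  exact hI _ htl _ ht hne l hl (add_sub_cancel_left t (l ^ 2))

theorem card_filter_add_mem {α β : Type*} [AddGroup α] [Fintype α] [Fintype β] [DecidableEq α]
    (f : β → α) (I : Finset α) :
    #{p : α × β | p.1 + f p.2 ∈ I} = Fintype.card β * #I := by
  rw [← card_univ, ← card_product]
  exact card_nbij' (fun p ↦ (p.2, p.1 + f p.2)) (fun q ↦ (q.2 - f q.1, q.1))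
    (by simp [Set.MapsTo]) (by simp [Set.MapsTo]) (fun _ _ ↦ by simp) (fun _ _ ↦ by simp)

theorem stmt_10_general (F : Type*) [Field F] [Fintype F] [DecidableEq F]
    (I : Finset F)
    (hI : ∀ a ∈ I, ∀ b ∈ I, a ≠ b → ∀ s : F, s ≠ 0 → a - b ≠ s ^ 2) :
    (∀ x y : F, x + y ^ 2 ∈ I →
      ∀ l : F, (x - 2 * l * y) + (y + l) ^ 2 ∈ I → l = 0) ∧
    (Finset.univ.filter (fun p : F × F => p.1 + p.2 ^ 2 ∈ I)).card
      = Fintype.card F * I.card := by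
  refine ⟨fun x y hxy l hl ↦ eq_zero_of_mem_of_add_sq_mem hI hxy ?_, card_filter_add_mem (· ^ 2) I⟩
  rwa [← sub_two_mul_mul_add_add_sq]

/-- Paley lifting (Sz\H{o}nyi): let `F` be a finite field whose characteristic is
`≡ 1 (mod 4)` and let `I ⊆ F` be such that no difference of two distinct elements
of `I` is a nonzero square. Then `P = {(x,y) : x + y² ∈ I}` together with the
lines `ℓ_{x,y} = {(x - 2λy, y + λ) : λ ∈ F}` forms an induced matching of size
`q·|I|`: each line `ℓ_{x,y}` meets `P` only at `(x,y)`, and `|P| = q·|I|`. -/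
theorem stmt_10 (F : Type*) [Field F] [Fintype F] [DecidableEq F]
    (hchar : ringChar F % 4 = 1)
    (I : Finset F)
    (hI : ∀ a ∈ I, ∀ b ∈ I, a ≠ b → ∀ s : F, s ≠ 0 → a - b ≠ s ^ 2) :
    (∀ x y : F, x + y ^ 2 ∈ I →
      ∀ l : F, (x - 2 * l * y) + (y + l) ^ 2 ∈ I → l = 0) ∧
    (Finset.univ.filter (fun p : F × F => p.1 + p.2 ^ 2 ∈ I)).card
      = Fintype.card F * I.card :=
  stmt_10_general F I hI
end

section
/- Let q be a prime, N = ⌊q/3⌋, M = ⌊√q/2⌋, and let A ⊆ {1, ..., ⌊q/10⌋} be a set such that the difference of any two distinct elements of A is never a perfect square. Define P = {(x,y) ∈ [N] × [M] : 2x - y^2 ∈ A} and for p = (x,y) ∈ P the line ℓ_p = {(x + ty, y + t) : t ∈ F_q} (reduced mod q). Then for distinct p, p' ∈ P, p' does not lie on ℓ_p over F_q; i.e., these pairs form an induced matching in the point-line incidence graph of F_q^2. -/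
/-!
Along the line `{(x + t y, y + t)}` the quantity `2x - y²` drops by exactly `t²`, so two points
`p, p'` on a common line satisfy `a - a' ≡ (y' - y)² (mod q)` for their labels `a = 2x - y²`,
`a' = 2x' - y'²` in `A`. The size bounds make both sides smaller than `q` in absolute value,
so the congruence is an equality over `ℤ`; square-difference-freeness then forces `a = a'`,
hence `y = y'` and `x = x'`.
-/

lemma two_mul_sub_sq_sub_eq_sq {R : Type*} [CommRing R] {x y x' y' t : R}
    (h1 : x' = x + t * y) (h2 : y' = y + t) :
    (2 * x - y ^ 2) - (2 * x' - y' ^ 2) = (y' - y) ^ 2 := by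
  subst h1 h2
  ring

lemma four_mul_sq_sqrt_div_two_le (q : ℕ) : 4 * (Nat.sqrt q / 2) ^ 2 ≤ q :=
  calc 4 * (Nat.sqrt q / 2) ^ 2 = (2 * (Nat.sqrt q / 2)) * (2 * (Nat.sqrt q / 2)) := by ring
    _ ≤ Nat.sqrt q * Nat.sqrt q := Nat.mul_le_mul (Nat.mul_div_le _ _) (Nat.mul_div_le _ _)
    _ ≤ q := Nat.sqrt_le q

lemma sq_sub_le_of_mem_Icc {y y' M : ℤ} (hy : y ∈ Finset.Icc 1 M) (hy' : y' ∈ Finset.Icc 1 M) :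
    (y' - y) ^ 2 ≤ M ^ 2 := by
  rw [Finset.mem_Icc] at hy hy'
  rw [sq_le_sq, abs_of_nonneg (by omega : (0 : ℤ) ≤ M)]
  exact abs_le.2 ⟨by omega, by omega⟩

lemma sub_eq_of_intCast_sub_eq {q : ℕ} {a a' s : ℤ}
    (ha : a ∈ Finset.Icc 1 ((q : ℤ) / 10)) (ha' : a' ∈ Finset.Icc 1 ((q : ℤ) / 10))
    (hs : 0 ≤ s) (hsq : 4 * s ≤ q) (h : ((a - a' : ℤ) : ZMod q) = s) :
    a - a' = s := by
  rw [Finset.mem_Icc] at ha ha'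
  have hdvd : (q : ℤ) ∣ a - a' - s :=
    (ZMod.intCast_zmod_eq_zero_iff_dvd _ _).1 (by push_cast at h ⊢; rw [h, sub_self])
  have := Int.eq_zero_of_abs_lt_dvd hdvd (abs_lt.2 ⟨by omega, by omega⟩)
  omega

theorem stmt_11_general (q : ℕ)
    (A : Finset ℤ) (hA : A ⊆ Finset.Icc 1 ((q : ℤ) / 10))
    (hsdf : ∀ a ∈ A, ∀ b ∈ A, a ≠ b → ∀ m : ℤ, a - b ≠ m ^ 2)
    (x y x' y' : ℤ)
    (hy : y ∈ Finset.Icc 1 ((Nat.sqrt q / 2 : ℕ) : ℤ))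
    (hy' : y' ∈ Finset.Icc 1 ((Nat.sqrt q / 2 : ℕ) : ℤ))
    (hxy : 2 * x - y ^ 2 ∈ A) (hxy' : 2 * x' - y' ^ 2 ∈ A)
    (t : ZMod q)
    (h1 : (x' : ZMod q) = (x : ZMod q) + t * (y : ZMod q))
    (h2 : (y' : ZMod q) = (y : ZMod q) + t) :
    x = x' ∧ y = y' := by
  have hsq : 4 * (y' - y) ^ 2 ≤ q := by
    have hM : 4 * ((Nat.sqrt q / 2 : ℕ) : ℤ) ^ 2 ≤ q := by
      exact_mod_cast four_mul_sq_sqrt_div_two_le q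
    linarith [sq_sub_le_of_mem_Icc hy hy']
  have hcong : (((2 * x - y ^ 2) - (2 * x' - y' ^ 2) : ℤ) : ZMod q) = ((y' - y) ^ 2 : ℤ) := by
    push_cast
    exact two_mul_sub_sq_sub_eq_sq h1 h2
  have hdiff := sub_eq_of_intCast_sub_eq (hA hxy) (hA hxy') (sq_nonneg _) hsq hcong
  have hlabel : 2 * x - y ^ 2 = 2 * x' - y' ^ 2 := by
    by_contra hne
    exact hsdf _ hxy _ hxy' hne _ hdiff
  have hyy : y = y' := by
    have : (y' - y) ^ 2 = 0 := by omega
    linarith [pow_eq_zero_iff two_ne_zero |>.1 this]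
  subst hyy
  exact ⟨by omega, rfl⟩

/-- Ruzsa lifting: let `q` be a prime, `N = ⌊q/3⌋`, `M = ⌊√q⌋/2`, and let
`A ⊆ {1,…,⌊q/10⌋}` be square-difference-free. If `(x,y), (x',y') ∈ [N] × [M]`
satisfy `2x - y² ∈ A` and `2x' - y'² ∈ A`, and `(x',y')` lies on the line
`{(x + ty, y + t) : t}` over `F_q`, then `(x,y) = (x',y')`; i.e. these pairs form
an induced matching in the point–line incidence graph of `F_q²`. -/
theorem stmt_11 (q : ℕ) (hq : q.Prime)
    (A : Finset ℤ) (hA : A ⊆ Finset.Icc 1 ((q : ℤ) / 10))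
    (hsdf : ∀ a ∈ A, ∀ b ∈ A, a ≠ b → ∀ m : ℤ, a - b ≠ m ^ 2)
    (x y x' y' : ℤ)
    (hx : x ∈ Finset.Icc 1 ((q : ℤ) / 3))
    (hx' : x' ∈ Finset.Icc 1 ((q : ℤ) / 3))
    (hy : y ∈ Finset.Icc 1 ((Nat.sqrt q / 2 : ℕ) : ℤ))
    (hy' : y' ∈ Finset.Icc 1 ((Nat.sqrt q / 2 : ℕ) : ℤ))
    (hxy : 2 * x - y ^ 2 ∈ A) (hxy' : 2 * x' - y' ^ 2 ∈ A)
    (t : ZMod q)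
    (h1 : (x' : ZMod q) = (x : ZMod q) + t * (y : ZMod q))
    (h2 : (y' : ZMod q) = (y : ZMod q) + t) :
    x = x' ∧ y = y' :=
  stmt_11_general q A hA hsdf x y x' y' hy hy' hxy hxy' t h1 h2
end

section
/- Suppose q = p^s is a prime power and there is an induced matching of size m in the point-line incidence graph of F_p^{d_0}. Then there is an induced matching of size m^s · q^{(s-1)d_0} in the point-line incidence graph of F_q^{s·d_0}. Consequently IM(s·d_0, q) ≥ IM(d_0, p)^s · q^{(s-1)d_0}. -/
/-!
Fix an `F_p`-basis `b` of `F_q` and write every element of `F_q` through its coefficients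
`π_r`. Split `F_q^{s d₀}` into `s` blocks `F_q^{d₀}`. For a choice `a : Fin s → Fin m` of
matching edges, one per block, and arbitrary "free" coefficients, take the point whose block
`k` has `π_k`-coefficient vector `P (a k)`, the other `s - 1` coefficient vectors being the
free ones, and the line through it whose direction in block `k` is `V (a k)`. Since the
directions have `F_p`-coordinates, `π_r (t • V) = π_r t • V`, so an incidence forces, in
block `k` and coefficient `k`, `P (a k) = P (a' k) + π_k t • V (a' k)`; the matching gives
`a k = a' k` and `π_k t = 0` for every `k`, hence `t = 0`, and then the free coefficients
agree. There are `m^s` choices of `a` and `p^{s (s-1) d₀} = q^{(s-1) d₀}` of the free data.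
-/

/-- There is an induced matching of size `m` in the point–line incidence graph of
`F^d`: points `p i` with lines `ℓ_i` through `p i` in direction `v i ≠ 0`, such
that `p i ∈ ℓ_j` iff `i = j`. -/
def HasInducedMatching (F : Type*) [Field F] (d m : ℕ) : Prop :=
  ∃ (p : Fin m → (Fin d → F)) (v : Fin m → (Fin d → F)),
    (∀ i, v i ≠ 0) ∧ ∀ i j : Fin m, (∃ t : F, p i = p j + t • v j) ↔ i = j

open Function Module

section Matching

variable (F : Type*) {E E' ι κ : Type*} [DivisionRing F] [AddCommGroup E] [Module F E]
  [AddCommGroup E'] [Module F E']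

def IsInducedMatching (P V : ι → E) : Prop :=
  (∀ i, V i ≠ 0) ∧ ∀ i j, (∃ t : F, P i = P j + t • V j) ↔ i = j

variable {F} {P V : ι → E}

theorem IsInducedMatching.eq_and_eq_zero (hM : IsInducedMatching F P V) {i j : ι} {t : F}
    (h : P i = P j + t • V j) : i = j ∧ t = 0 := by
  obtain rfl := (hM.2 i j).1 ⟨t, h⟩
  have hzero : t • V i = 0 := by simpa using h
  exact ⟨rfl, (smul_eq_zero.1 hzero).resolve_right (hM.1 i)⟩

theorem IsInducedMatching.comp {e : κ → ι} (hM : IsInducedMatching F P V) (he : Injective e) :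
    IsInducedMatching F (P ∘ e) (V ∘ e) :=
  ⟨fun i => hM.1 (e i), fun i j => (hM.2 (e i) (e j)).trans he.eq_iff⟩

theorem IsInducedMatching.map (hM : IsInducedMatching F P V) {f : E →ₗ[F] E'}
    (hf : Injective f) :
    IsInducedMatching F (f ∘ P) (f ∘ V) := by
  refine ⟨fun i => (map_ne_zero_iff f hf).2 (hM.1 i), fun i j => ?_⟩
  simp only [comp_apply, ← map_smul, ← map_add, hf.eq_iff]
  exact hM.2 i j

end Matching

theorem IsInducedMatching.hasInducedMatching {F ι D : Type*} [Field F] [Fintype ι] [Fintype D]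
    {P V : ι → D → F} (hM : IsInducedMatching F P V) :
    HasInducedMatching F (Fintype.card D) (Fintype.card ι) :=
  ⟨_, _, (hM.map (LinearEquiv.funCongrLeft F F (Fintype.equivFin D).symm).injective).comp
    (Fintype.equivFin ι).symm.injective⟩

theorem Module.Basis.eq_add_mul_algebraMap_iff {K A ι : Type*} [CommSemiring K] [Semiring A]
    [Algebra K A] (b : Basis ι K A) {x y t : A} {v : K} :
    x = y + t * algebraMap K A v ↔ ∀ r, b.repr x r = b.repr y r + v * b.repr t r := by
  rw [← Algebra.commutes, ← Algebra.smul_def, b.ext_elem_iff]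
  simp

section Lift

variable {K F I D : Type*} [Field K] [Field F] [Algebra K F] {n : ℕ}

abbrev LiftIndex (K I D : Type*) (n : ℕ) :=
  (Fin (n + 1) → I) × (Fin (n + 1) → Fin n → D → K)

def liftCoeff (P : I → D → K) (x : LiftIndex K I D n) (k : Fin (n + 1)) :
    Fin (n + 1) → D → K :=
  Fin.insertNth k (P (x.1 k)) (x.2 k)

noncomputable def liftPoint (b : Basis (Fin (n + 1)) K F) (P : I → D → K)
    (x : LiftIndex K I D n) :
    Fin (n + 1) × D → F :=
  fun kc => ∑ r, liftCoeff P x kc.1 r kc.2 • b r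

def liftDir (V : I → D → K) (x : LiftIndex K I D n) : Fin (n + 1) × D → F :=
  fun kc => algebraMap K F (V (x.1 kc.1) kc.2)

variable {P V : I → D → K}

theorem IsInducedMatching.eq_of_liftCoeff_eq (hM : IsInducedMatching K P V)
    {x y : LiftIndex K I D n} {τ : Fin (n + 1) → K}
    (h : ∀ k r, liftCoeff P x k r = liftCoeff P y k r + τ r • V (y.1 k)) : x = y := by
  have hdiag : ∀ k, x.1 k = y.1 k ∧ τ k = 0 := fun k =>
    hM.eq_and_eq_zero (by simpa [liftCoeff] using h k k)
  have h1 : x.1 = y.1 := funext fun k => (hdiag k).1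
  have h2 : x.2 = y.2 := by
    funext k j
    simpa [liftCoeff, (hdiag _).2] using h k (k.succAbove j)
  exact Prod.ext h1 h2

theorem liftPoint_eq_add_smul_liftDir_iff (b : Basis (Fin (n + 1)) K F)
    {x y : LiftIndex K I D n} {t : F} :
    liftPoint b P x = liftPoint b P y + t • liftDir V y ↔
      ∀ k r, liftCoeff P x k r = liftCoeff P y k r + b.repr t r • V (y.1 k) := by
  simp only [funext_iff, Prod.forall, liftPoint, liftDir, Pi.add_apply, Pi.smul_apply,
    smul_eq_mul, b.eq_add_mul_algebraMap_iff, b.repr_sum_self, mul_comm (V _ _)]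
  exact forall_congr' fun _ => forall_comm

theorem IsInducedMatching.lift (hM : IsInducedMatching K P V) (b : Basis (Fin (n + 1)) K F) :
    IsInducedMatching F (liftPoint b P) (liftDir (n := n) V) := by
  refine ⟨fun x hx => ?_, fun x y => ⟨fun ⟨t, ht⟩ => ?_, ?_⟩⟩
  · obtain ⟨c, hc⟩ := Function.ne_iff.1 (hM.1 (x.1 0))
    exact hc ((algebraMap K F).injective (by simpa [liftDir] using congrFun hx (0, c)))
  · exact hM.eq_of_liftCoeff_eq ((liftPoint_eq_add_smul_liftDir_iff b).1 ht)
  · rintro rfl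
    exact ⟨0, by simp⟩

end Lift

/-- Lifting matchings from prime fields to prime power fields: if `q = p^s` and
there is an induced matching of size `m` in `F_p^{d₀}`, then there is an induced
matching of size `m^s · q^{(s-1)d₀}` in `F_q^{s·d₀}`. -/
theorem stmt_12 (p s d0 m : ℕ) [hp : Fact p.Prime] (F : Type*) [Field F] [Fintype F]
    (hcard : Fintype.card F = p ^ s)
    (h : HasInducedMatching (ZMod p) d0 m) :
    HasInducedMatching F (s * d0) (m ^ s * (p ^ s) ^ ((s - 1) * d0)) := by
  obtain ⟨P, V, hM⟩ : ∃ P V : Fin m → Fin d0 → ZMod p, IsInducedMatching (ZMod p) P V := h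
  have : CharP F p := charP_of_card_eq_prime_pow hcard
  let : Algebra (ZMod p) F := ZMod.algebra F p
  have hfinrank : finrank (ZMod p) F = s := by
    have := Module.card_eq_pow_finrank (K := ZMod p) (V := F)
    rw [ZMod.card, hcard] at this
    exact Nat.pow_right_injective hp.out.two_le this.symm
  obtain ⟨n, rfl⟩ : ∃ n, s = n + 1 := Nat.exists_eq_add_one.2 (hfinrank ▸ finrank_pos)
  have hlift := (hM.lift ((finBasis (ZMod p) F).reindex (finCongr hfinrank))).hasInducedMatching
  convert hlift using 1
  · simp
  · simp only [Fintype.card_prod, Fintype.card_fun, Fintype.card_fin, ZMod.card,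
      add_tsub_cancel_right]
    ring
end

section
/- Let k be a positive integer, p a prime with p ≡ 1 (mod 2k), and A_p ⊂ ℤ/pℤ a set of size ≥ k whose difference set avoids nonzero k-th powers mod p. For a positive integer N, let L = ⌊log_p N⌋ and let A ⊂ [N] be the set of integers of the form 1 + ∑_{i=0}^{L-1} c_i p^i with digits c_i ∈ {0, ..., p-1} for all i, and c_i ∈ A_p (viewed as digits) whenever k divides i. Then A - A contains no nonzero perfect k-th power, and |A| ≥ p^{L-⌈L/k⌉} · k^{⌈L/k⌉}. -/
/-!
If `a - a' = m ^ k ≠ 0`, let `j` be the lowest position where the base-`p` digits `c, c'` of `a`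
and `a'` differ. Then `a - a' = p ^ j * S` with `S ≡ c j - c' j ≢ 0 (mod p)`, so comparing
`p`-adic valuations gives `k ∣ j` and `S = m' ^ k`. Hence `c j - c' j` is a `k`-th power mod `p`
with `c j, c' j ∈ A_p`, which is excluded. The size bound counts admissible digit strings, which
give distinct integers by uniqueness of base-`p` expansions.
-/

open Finset

theorem eq_of_pow_mul_eq_pow_mul {M : Type*} [CommMonoidWithZero M] [IsCancelMulZero M]
    {p u v : M} (hp : p ≠ 0) (hu : ¬p ∣ u) (hv : ¬p ∣ v) {a b : ℕ}
    (h : p ^ a * u = p ^ b * v) : a = b := by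
  wlog hab : a ≤ b generalizing a b u v
  · exact (this hv hu h.symm (le_of_not_ge hab)).symm
  obtain ⟨n, rfl⟩ := Nat.exists_eq_add_of_le hab
  have hu' : u = p ^ n * v :=
    mul_left_cancel₀ (pow_ne_zero a hp) (by rw [h, pow_add, mul_assoc])
  rcases n with _ | n
  · rfl
  · exact absurd (hu' ▸ dvd_mul_of_dvd_left (dvd_pow_self p n.succ_ne_zero) v) hu

theorem Prime.dvd_and_exists_eq_pow_of_pow_mul_eq_pow {M : Type*} [CommMonoidWithZero M]
    [IsCancelMulZero M] {p u m : M} (hp : Prime p) (hm : FiniteMultiplicity p m) (hu : ¬p ∣ u)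
    {j k : ℕ} (h : p ^ j * u = m ^ k) : k ∣ j ∧ ∃ m', u = m' ^ k := by
  obtain ⟨m', hm', hpm'⟩ := hm.exists_eq_pow_mul_and_not_dvd
  rw [hm', mul_pow, ← pow_mul] at h
  obtain rfl := eq_of_pow_mul_eq_pow_mul hp.ne_zero hu (fun h' => hpm' (hp.dvd_of_dvd_pow h')) h
  exact ⟨dvd_mul_left k _, m', mul_left_cancel₀ (pow_ne_zero _ hp.ne_zero) h⟩

theorem exists_sum_range_mul_pow_eq {R : Type*} [CommRing R] {p : R} {e : ℕ → R} {j L : ℕ}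
    (hjL : j < L) (he : ∀ i < j, e i = 0) :
    ∃ T : R, ∑ i ∈ range L, e i * p ^ i = p ^ j * (e j + p * T) := by
  obtain ⟨T, hT⟩ : p ^ (j + 1) ∣ ∑ i ∈ Ico (j + 1) L, e i * p ^ i :=
    dvd_sum fun i hi => dvd_mul_of_dvd_right (pow_dvd_pow p (mem_Ico.mp hi).1) _
  refine ⟨T, ?_⟩
  rw [← sum_range_add_sum_Ico _ hjL, sum_range_succ,
    sum_eq_zero fun i hi => by rw [he i (mem_range.mp hi), zero_mul], hT]
  ring

theorem card_filter_dvd_range {k : ℕ} (hk : k ≠ 0) (L : ℕ) :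
    #{i ∈ range L | k ∣ i} = (L + k - 1) / k := by
  have hlt : ∀ t, t < (L + k - 1) / k ↔ k * t < L := fun t => by
    rw [Nat.lt_iff_add_one_le, Nat.le_div_iff_mul_le (Nat.pos_of_ne_zero hk), add_one_mul,
      mul_comm t k]
    omega
  have himg : {i ∈ range L | k ∣ i} = (range ((L + k - 1) / k)).image (k * ·) := by
    ext i
    simp only [mem_filter, mem_range, mem_image]
    constructor
    · rintro ⟨hiL, t, rfl⟩
      exact ⟨t, (hlt t).mpr hiL, rfl⟩
    · rintro ⟨t, ht, rfl⟩
      exact ⟨(hlt t).mp ht, t, rfl⟩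
  rw [himg, card_image_of_injective _ (mul_right_injective₀ hk), card_range]

theorem prod_range_ite_dvd {M : Type*} [CommMonoid M] {k : ℕ} (hk : k ≠ 0) (L : ℕ) (x y : M) :
    ∏ i ∈ range L, (if k ∣ i then x else y) =
      y ^ (L - (L + k - 1) / k) * x ^ ((L + k - 1) / k) := by
  have hcard := card_filter_add_card_filter_not (s := range L) (fun i => k ∣ i)
  rw [card_range, card_filter_dvd_range hk] at hcard
  rw [prod_ite, prod_const, prod_const, card_filter_dvd_range hk, mul_comm]
  congr
  omega

section Digits

variable {p L : ℕ} {c d : ℕ → ℕ}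

theorem sum_digits_lt (hc : ∀ i, c i < p) : ∑ i ∈ range L, c i * p ^ i < p ^ L := by
  induction L with
  | zero => simp
  | succ L ih =>
    calc ∑ i ∈ range (L + 1), c i * p ^ i
        = ∑ i ∈ range L, c i * p ^ i + c L * p ^ L := sum_range_succ _ _
      _ < (c L + 1) * p ^ L := by rw [add_one_mul, add_comm]; gcongr
      _ ≤ p ^ (L + 1) := by rw [pow_succ']; exact Nat.mul_le_mul_right _ (hc L)

theorem exists_sum_digits_sub_eq (hc : ∀ i, c i < p) (hd : ∀ i, d i < p)
    (hcd : ∃ i < L, c i ≠ d i) :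
    ∃ j < L, (c j : ZMod p) ≠ d j ∧ ∃ S : ℤ, (S : ZMod p) = c j - d j ∧
      ((∑ i ∈ range L, c i * p ^ i : ℕ) : ℤ) - (∑ i ∈ range L, d i * p ^ i : ℕ) = p ^ j * S := by
  classical
  obtain ⟨hjL, hj⟩ := Nat.find_spec hcd
  have hmin : ∀ i < Nat.find hcd, (c i : ℤ) - d i = 0 := fun i hi => by
    rw [sub_eq_zero, Nat.cast_inj]
    by_contra h
    exact Nat.find_min hcd hi ⟨hi.trans hjL, h⟩
  obtain ⟨T, hT⟩ := exists_sum_range_mul_pow_eq (p := (p : ℤ)) hjL hmin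
  refine ⟨_, hjL, ?_, _, ?_, by push_cast; rw [← sum_sub_distrib, ← hT]; simp only [sub_mul]⟩
  · rw [Ne, ZMod.natCast_eq_natCast_iff', Nat.mod_eq_of_lt (hc _), Nat.mod_eq_of_lt (hd _)]
    exact hj
  · simp

theorem eq_of_sum_digits_eq (hc : ∀ i, c i < p) (hd : ∀ i, d i < p)
    (h : ∑ i ∈ range L, c i * p ^ i = ∑ i ∈ range L, d i * p ^ i) : ∀ i < L, c i = d i := by
  by_contra! hcd
  obtain ⟨j, -, hj, S, hS, hdiff⟩ := exists_sum_digits_sub_eq hc hd hcd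
  have hp : (p : ℤ) ^ j ≠ 0 := pow_ne_zero _ (by have := hc 0; omega)
  rw [h, sub_self, eq_comm, mul_eq_zero, or_iff_right hp] at hdiff
  rw [hdiff, Int.cast_zero, eq_comm, sub_eq_zero] at hS
  exact hj hS

theorem sum_digits_sub_ne_pow {k : ℕ} (hp : p.Prime) (hk : k ≠ 0)
    {Ap : Finset (ZMod p)} (hAp : ∀ a ∈ Ap, ∀ b ∈ Ap, a ≠ b → ∀ s : ZMod p, a - b ≠ s ^ k)
    (hc : ∀ i, c i < p) (hd : ∀ i, d i < p)
    (hcA : ∀ i, i < L → k ∣ i → (c i : ZMod p) ∈ Ap)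
    (hdA : ∀ i, i < L → k ∣ i → (d i : ZMod p) ∈ Ap) {m : ℤ} (hm : m ≠ 0) :
    ((∑ i ∈ range L, c i * p ^ i : ℕ) : ℤ) - (∑ i ∈ range L, d i * p ^ i : ℕ) ≠ m ^ k := by
  intro h
  by_cases hcd : ∀ i < L, c i = d i
  · rw [sum_congr rfl fun i hi => by rw [hcd i (mem_range.mp hi)], sub_self] at h
    exact hm ((pow_eq_zero_iff hk).mp h.symm)
  push Not at hcd
  obtain ⟨j, hjL, hj, S, hS, hdiff⟩ := exists_sum_digits_sub_eq hc hd hcd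
  have hpS : ¬(p : ℤ) ∣ S := by
    rwa [← ZMod.intCast_zmod_eq_zero_iff_dvd, hS, sub_eq_zero]
  have hpm : FiniteMultiplicity (p : ℤ) m :=
    Int.finiteMultiplicity_iff.mpr ⟨by simpa using hp.ne_one, hm⟩
  obtain ⟨⟨e, rfl⟩, m', rfl⟩ :=
    (Nat.prime_iff_prime_int.mp hp).dvd_and_exists_eq_pow_of_pow_mul_eq_pow hpm hpS
      (hdiff.symm.trans h)
  exact hAp _ (hcA _ hjL (dvd_mul_right k e)) _ (hdA _ hjL (dvd_mul_right k e)) hj m'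
    (by rw [← hS, Int.cast_pow])

theorem prod_card_le_ncard_of_sum_digits_mem {b : ℕ} (hp : 0 < p) {D : ℕ → Finset ℕ}
    (hD : ∀ i, ∀ x ∈ D i, x < p) {A : Set ℕ} (hA : A.Finite)
    (hmem : ∀ c : ℕ → ℕ, (∀ i, c i < p) → (∀ i < L, c i ∈ D i) →
      b + ∑ i ∈ range L, c i * p ^ i ∈ A) :
    ∏ i ∈ range L, #(D i) ≤ A.ncard := by
  classical
  let extend (f : ∀ i ∈ range L, ℕ) (i : ℕ) : ℕ := if h : i ∈ range L then f i h else 0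
  have hext_mem : ∀ f ∈ (range L).pi D, ∀ i < L, extend f i ∈ D i := fun f hf i hi => by
    simpa [extend, hi] using mem_pi.mp hf i (mem_range.mpr hi)
  have hext_lt : ∀ f ∈ (range L).pi D, ∀ i, extend f i < p := fun f hf i => by
    by_cases hi : i < L
    · exact hD i _ (hext_mem f hf i hi)
    · simpa [extend, hi] using hp
  let value (f : ∀ i ∈ range L, ℕ) : ℕ := b + ∑ i ∈ range L, extend f i * p ^ i
  have hinj : Set.InjOn value ((range L).pi D) := fun f hf f' hf' h => by
    have := eq_of_sum_digits_eq (hext_lt f hf) (hext_lt f' hf') (Nat.add_left_cancel h)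
    funext i hi
    simpa only [extend, dif_pos hi] using this i (mem_range.mp hi)
  calc ∏ i ∈ range L, #(D i) = (((range L).pi D).image value : Set ℕ).ncard := by
        rw [Set.ncard_coe_finset, card_image_of_injOn hinj, card_pi]
    _ ≤ A.ncard := by
        refine Set.ncard_le_ncard ?_ hA
        rw [coe_image, Set.image_subset_iff]
        exact fun f hf => hmem _ (hext_lt f hf) (hext_mem f hf)

theorem pow_mul_card_pow_le_ncard [NeZero p] {k b : ℕ} (hk : k ≠ 0) {Ap : Finset (ZMod p)}
    {A : Set ℕ} (hA : A.Finite)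
    (hmem : ∀ c : ℕ → ℕ, (∀ i, c i < p) → (∀ i, i < L → k ∣ i → (c i : ZMod p) ∈ Ap) →
      b + ∑ i ∈ range L, c i * p ^ i ∈ A) :
    p ^ (L - (L + k - 1) / k) * #Ap ^ ((L + k - 1) / k) ≤ A.ncard := by
  classical
  let D (i : ℕ) : Finset ℕ := if k ∣ i then Ap.image ZMod.val else range p
  have hD : ∀ i, ∀ x ∈ D i, x < p := fun i x hx => by
    by_cases hi : k ∣ i
    all_goals simp only [D, hi, if_true, if_false, mem_image, mem_range] at hx
    · obtain ⟨a, -, rfl⟩ := hx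
      exact ZMod.val_lt a
    · exact hx
  have hDA : ∀ c : ℕ → ℕ, (∀ i, c i < p) → (∀ i < L, c i ∈ D i) →
      b + ∑ i ∈ range L, c i * p ^ i ∈ A := fun c hc hcD => by
    refine hmem c hc fun i hi hki => ?_
    obtain ⟨a, ha, hac⟩ := by simpa only [D, hki, if_true, mem_image] using hcD i hi
    rwa [← hac, ZMod.natCast_zmod_val]
  calc p ^ (L - (L + k - 1) / k) * #Ap ^ ((L + k - 1) / k) = ∏ i ∈ range L, #(D i) := by
        rw [← prod_range_ite_dvd hk]
        refine prod_congr rfl fun i _ => ?_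
        by_cases hi : k ∣ i
        · simp [D, hi, card_image_of_injective _ (ZMod.val_injective p)]
        · simp [D, hi]
    _ ≤ A.ncard := prod_card_le_ncard_of_sum_digits_mem (NeZero.pos p) hD hA hDA

end Digits

theorem stmt_15_general (k p N : ℕ) (hk : 1 ≤ k) (hp : p.Prime)
    (hN : 1 ≤ N)
    (Ap : Finset (ZMod p)) (hcard : k ≤ Ap.card)
    (hAp : ∀ a ∈ Ap, ∀ b ∈ Ap, a ≠ b → ∀ s : ZMod p, a - b ≠ s ^ k) :
    let L := Nat.log p N
    let A : Set ℕ := {n | ∃ c : ℕ → ℕ, (∀ i, c i < p) ∧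
      (∀ i, i < L → k ∣ i → ((c i : ZMod p) ∈ Ap)) ∧
      n = 1 + ∑ i ∈ Finset.range L, c i * p ^ i}
    (A ⊆ Set.Icc 1 N) ∧
    (∀ a ∈ A, ∀ b ∈ A, ∀ m : ℤ, m ≠ 0 → (a : ℤ) - (b : ℤ) ≠ m ^ k) ∧
    p ^ (L - (L + k - 1) / k) * k ^ ((L + k - 1) / k) ≤ A.ncard := by
  intro L A
  have : NeZero p := ⟨hp.ne_zero⟩
  have hk0 : k ≠ 0 := by omega
  have hA : A ⊆ Set.Icc 1 N := by
    rintro _ ⟨c, hc, -, rfl⟩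
    have hpL : p ^ L ≤ N := Nat.pow_log_le_self p (by omega)
    exact ⟨by omega, by have := sum_digits_lt (L := L) hc; omega⟩
  refine ⟨hA, ?_, ?_⟩
  · rintro _ ⟨c, hc, hcA, rfl⟩ _ ⟨d, hd, hdA, rfl⟩ m hm
    rw [Nat.cast_add, Nat.cast_add, add_sub_add_left_eq_sub]
    exact sum_digits_sub_ne_pow hp hk0 hAp hc hd hcA hdA hm
  · calc p ^ (L - (L + k - 1) / k) * k ^ ((L + k - 1) / k)
        ≤ p ^ (L - (L + k - 1) / k) * #Ap ^ ((L + k - 1) / k) := by gcongr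
      _ ≤ A.ncard := pow_mul_card_pow_le_ncard hk0 ((Set.finite_Icc 1 N).subset hA)
        fun c hc hcA => ⟨c, hc, hcA, rfl⟩

/-- Ruzsa's base-`p` construction for `k`-th powers: let `p ≡ 1 (mod 2k)` be prime
and `A_p ⊆ ℤ/pℤ` a set of size `≥ k` whose difference set avoids nonzero `k`-th
powers. For `N ≥ 1`, let `L = ⌊log_p N⌋` and let `A ⊆ [N]` consist of the integers
`1 + ∑_{i<L} c_i p^i` with digits `c_i ∈ {0,…,p-1}` such that `c_i ∈ A_p` whenever
`k ∣ i`. Then `A - A` contains no nonzero perfect `k`-th power, and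
`|A| ≥ p^{L-⌈L/k⌉} · k^{⌈L/k⌉}`. -/
theorem stmt_15 (k p N : ℕ) (hk : 1 ≤ k) (hp : p.Prime) (hmod : p % (2 * k) = 1)
    (hN : 1 ≤ N)
    (Ap : Finset (ZMod p)) (hcard : k ≤ Ap.card)
    (hAp : ∀ a ∈ Ap, ∀ b ∈ Ap, a ≠ b → ∀ s : ZMod p, a - b ≠ s ^ k) :
    let L := Nat.log p N
    let A : Set ℕ := {n | ∃ c : ℕ → ℕ, (∀ i, c i < p) ∧
      (∀ i, i < L → k ∣ i → ((c i : ZMod p) ∈ Ap)) ∧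
      n = 1 + ∑ i ∈ Finset.range L, c i * p ^ i}
    (A ⊆ Set.Icc 1 N) ∧
    (∀ a ∈ A, ∀ b ∈ A, ∀ m : ℤ, m ≠ 0 → (a : ℤ) - (b : ℤ) ≠ m ^ k) ∧
    p ^ (L - (L + k - 1) / k) * k ^ ((L + k - 1) / k) ≤ A.ncard :=
  stmt_15_general k p N hk hp hN Ap hcard hAp
end

section
/- Fix d ≥ 1 and integers N, M, L ≥ 1 with N ≥ ML. Let P ⊆ [N]^d × [M] ⊆ ℤ^{d+1}, and suppose each p ∈ P has an integer direction s_p = (u_p, 1) ∈ ℤ^{d+1} with ‖u_p‖_∞ ≤ L such that p' ∉ p + ℝ·s_p for all distinct p, p' ∈ P. Then under the scaling map φ(n_1,...,n_d,m) = (n_1/N, ..., n_d/N, L·m/N), the points q_p = φ(p) in [0,1]^{d+1} with lines through q_p in direction φ(s_p) satisfy: for all distinct p, p', the ℓ∞-distance from φ(p') to the line through φ(p) in direction φ(s_p) is at least 1/(2N). -/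
/-- The scaling map `φ(n₁,…,n_d,m) = (n₁/N, …, n_d/N, L·m/N)` from `ℤ^{d+1}`
to `[0,1]^{d+1}`. -/
noncomputable def phiMap (d N L : ℕ) (x : Fin (d + 1) → ℤ) : Fin (d + 1) → ℝ :=
  fun i => if i = Fin.last d then (L : ℝ) * (x i : ℝ) / (N : ℝ) else (x i : ℝ) / (N : ℝ)

/-!
Write `p' - p - r s = (p' - p - t s) + (t - r) s` with `t` the integer `p'ₗₐₛₜ - pₗₐₛₜ`.
If `L |t - r| ≥ 1/2`, the last coordinate, which `φ` scales by `L / N`, is already far enough.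
Otherwise `p' - p - t s` is a nonzero integer vector vanishing in the last coordinate, so one of
the first `d` coordinates is an integer of absolute value at least `1`, perturbed by
`|(t - r) sᵢ| ≤ L |t - r| < 1/2`.
-/

lemma one_half_le_abs_intCast_add {k : ℤ} (hk : k ≠ 0) {x : ℝ} (hx : |x| < 1 / 2) :
    1 / 2 ≤ |(k : ℝ) + x| := by
  have hk' : (1 : ℝ) ≤ |(k : ℝ)| := by exact_mod_cast Int.one_le_abs hk
  have := abs_sub_abs_le_abs_add (k : ℝ) x
  linarith

lemma phiMap_apply (d N L : ℕ) (x : Fin (d + 1) → ℤ) (i : Fin (d + 1)) :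
    phiMap d N L x i = (if i = Fin.last d then (L : ℝ) else 1) * x i / N := by
  unfold phiMap
  split_ifs <;> ring

lemma phiMap_sub_add_smul (d N L : ℕ) (p p' s : Fin (d + 1) → ℤ) (r : ℝ) :
    phiMap d N L p' - (phiMap d N L p + r • phiMap d N L s) =
      (N : ℝ)⁻¹ • fun i => (if i = Fin.last d then (L : ℝ) else 1) * (p' i - (p i + r * s i)) := by
  ext i
  simp only [Pi.sub_apply, Pi.add_apply, Pi.smul_apply, smul_eq_mul, phiMap_apply]
  ring

lemma one_half_le_norm_sub_line {d : ℕ} {p p' s : Fin (d + 1) → ℤ} {L : ℝ}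
    (hs_last : s (Fin.last d) = 1) (hs : ∀ i : Fin d, |(s i.castSucc : ℝ)| ≤ L)
    (hsep : ∀ k : ℤ, p' ≠ p + k • s) (r : ℝ) :
    1 / 2 ≤ ‖fun i => (if i = Fin.last d then L else 1) * ((p' i : ℝ) - (p i + r * s i))‖ := by
  set t : ℤ := p' (Fin.last d) - p (Fin.last d)
  by_cases hfar : 1 / 2 ≤ |L * (t - r)|
  · refine hfar.trans (le_of_eq_of_le ?_ (norm_le_pi_norm _ (Fin.last d)))
    simp [hs_last, t, sub_sub]
  · obtain ⟨i, hi⟩ := Function.ne_iff.mp (hsep t)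
    have hi_last : i ≠ Fin.last d := by
      rintro rfl
      simp [hs_last, t] at hi
    obtain ⟨j, rfl⟩ := Fin.exists_castSucc_eq.mpr hi_last
    have hk : p' j.castSucc - (p j.castSucc + t * s j.castSucc) ≠ 0 := by
      simpa [sub_eq_zero] using hi
    have hsmall : |(t - r) * (s j.castSucc : ℝ)| < 1 / 2 := by
      calc |(t - r) * (s j.castSucc : ℝ)| ≤ |(t : ℝ) - r| * L := by
            rw [abs_mul]; exact mul_le_mul_of_nonneg_left (hs j) (abs_nonneg _)
        _ ≤ |L * (t - r)| := by rw [mul_comm, abs_mul]; gcongr; exact le_abs_self L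
        _ < 1 / 2 := not_le.mp hfar
    refine (one_half_le_abs_intCast_add hk hsmall).trans
      (le_of_eq_of_le ?_ (norm_le_pi_norm _ j.castSucc))
    simp only [Fin.castSucc_ne_last, if_false, one_mul, Real.norm_eq_abs]
    push_cast
    congr 1
    ring

theorem stmt_16_general (d N L : ℕ)
    (P : Set (Fin (d + 1) → ℤ))
    (s : (Fin (d + 1) → ℤ) → (Fin (d + 1) → ℤ))
    (hslast : ∀ p ∈ P, s p (Fin.last d) = 1)
    (hsbound : ∀ p ∈ P, ∀ i : Fin d, |s p i.castSucc| ≤ (L : ℤ))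
    (hsep : ∀ p ∈ P, ∀ p' ∈ P, p ≠ p' → ∀ r : ℝ,
      (fun i => (p' i : ℝ)) ≠ fun i => (p i : ℝ) + r * (s p i : ℝ)) :
    ∀ p ∈ P, ∀ p' ∈ P, p ≠ p' → ∀ r : ℝ,
      (1 : ℝ) / (2 * N) ≤ ‖phiMap d N L p' - (phiMap d N L p + r • phiMap d N L (s p))‖ := by
  intro p hp p' hp' hne r
  have hbound : ∀ i : Fin d, |(s p i.castSucc : ℝ)| ≤ L := fun i => by
    exact_mod_cast hsbound p hp i
  have hsep_int : ∀ k : ℤ, p' ≠ p + k • s p := fun k h =>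
    hsep p hp p' hp' hne k (by ext i; simp [h])
  calc (1 : ℝ) / (2 * N) = (N : ℝ)⁻¹ * (1 / 2) := by ring
    _ ≤ (N : ℝ)⁻¹ * ‖_‖ := by
      gcongr
      exact one_half_le_norm_sub_line (hslast p hp) hbound hsep_int r
    _ = _ := by rw [phiMap_sub_add_smul, norm_smul, norm_inv, Real.norm_natCast]

/-- Lattice matchings give separated Euclidean point–line configurations: if
`P ⊆ [N]^d × [M]` with `N ≥ ML`, and each `p ∈ P` has an integer direction
`s_p = (u_p, 1)` with `‖u_p‖_∞ ≤ L` such that no other point of `P` lies on the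
real line `p + ℝ s_p`, then after applying `φ`, the `ℓ∞`-distance from `φ(p')` to
the line through `φ(p)` in direction `φ(s_p)` is at least `1/(2N)` for `p ≠ p'`. -/
theorem stmt_16 (d N M L : ℕ) (hd : 1 ≤ d) (hN : 1 ≤ N) (hM : 1 ≤ M) (hL : 1 ≤ L)
    (hNML : M * L ≤ N)
    (P : Set (Fin (d + 1) → ℤ))
    (hPbox : ∀ p ∈ P, (∀ i : Fin d, p i.castSucc ∈ Set.Icc (1 : ℤ) (N : ℤ)) ∧
      p (Fin.last d) ∈ Set.Icc (1 : ℤ) (M : ℤ))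
    (s : (Fin (d + 1) → ℤ) → (Fin (d + 1) → ℤ))
    (hslast : ∀ p ∈ P, s p (Fin.last d) = 1)
    (hsbound : ∀ p ∈ P, ∀ i : Fin d, |s p i.castSucc| ≤ (L : ℤ))
    (hsep : ∀ p ∈ P, ∀ p' ∈ P, p ≠ p' → ∀ r : ℝ,
      (fun i => (p' i : ℝ)) ≠ fun i => (p i : ℝ) + r * (s p i : ℝ)) :
    ∀ p ∈ P, ∀ p' ∈ P, p ≠ p' → ∀ r : ℝ,
      (1 : ℝ) / (2 * N) ≤ ‖phiMap d N L p' - (phiMap d N L p + r • phiMap d N L (s p))‖ :=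
  stmt_16_general d N L P s hslast hsbound hsep
end

section
/- Let q be a prime power with odd characteristic and let a ∈ F_q^× be such that -a is a non-square in F_q. Let P = {(y² + a z², y, z) : y, z ∈ F_q} ⊂ F_q³, and for p = (x₀, y₀, z₀) ∈ P define the plane π_p = {(x,y,z) : x - 2y₀y - 2a z₀z = -y₀² - a z₀²}. Then p ∈ π_p and π_p ∩ P = {p} for every p ∈ P; hence the pairs (p, π_p) form an induced matching of size q² in the point-plane incidence graph of F_q³. -/
/-!
Substituting a point `(y² + a z², y, z)` of the paraboloid into the equation of the plane
attached to `(y₀, z₀)` leaves `(y - y₀)² + a (z - z₀)² = 0`. If `z ≠ z₀` this exhibits `-a` as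
the square of `(y - y₀) / (z - z₀)`, so `z = z₀`, and then `y = y₀`.
-/

theorem eq_zero_of_sq_add_mul_sq_eq_zero {K : Type*} [Field K] {a : K}
    (hns : ∀ s : K, -a ≠ s ^ 2) {y z : K} (h : y ^ 2 + a * z ^ 2 = 0) : y = 0 ∧ z = 0 := by
  have hz : z = 0 := by
    by_contra hz
    apply hns (y / z)
    field_simp
    linear_combination -h
  subst hz
  exact ⟨pow_eq_zero_iff two_ne_zero |>.mp (by simpa using h), rfl⟩

theorem Set.ncard_setOf_fst_eq {α β : Type*} (f : β → α) :
    {v : α × β | v.1 = f v.2}.ncard = Nat.card β := by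
  have hgraph : {v : α × β | v.1 = f v.2} = Set.range (fun b => (f b, b)) := by
    ext ⟨x, b⟩
    simp [eq_comm]
  rw [hgraph, ← Nat.card_coe_set_eq,
    Nat.card_range_of_injective fun b b' h => congrArg Prod.snd h]

theorem stmt_18_general (F : Type*) [Field F] [Fintype F]
    (a : F) (hns : ∀ s : F, -a ≠ s ^ 2) :
    (∀ y0 z0 : F,
      (y0 ^ 2 + a * z0 ^ 2) - 2 * y0 * y0 - 2 * a * z0 * z0 = -(y0 ^ 2 + a * z0 ^ 2)) ∧
    (∀ y0 z0 y z : F,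
      (y ^ 2 + a * z ^ 2) - 2 * y0 * y - 2 * a * z0 * z = -(y0 ^ 2 + a * z0 ^ 2) →
      y = y0 ∧ z = z0) ∧
    Set.ncard {v : F × F × F | v.1 = v.2.1 ^ 2 + a * v.2.2 ^ 2} = Fintype.card F ^ 2 := by
  refine ⟨fun y0 z0 => by ring, fun y0 z0 y z h => ?_, ?_⟩
  · have hsq : (y - y0) ^ 2 + a * (z - z0) ^ 2 = 0 := by linear_combination h
    obtain ⟨hy, hz⟩ := eq_zero_of_sq_add_mul_sq_eq_zero hns hsq
    exact ⟨sub_eq_zero.mp hy, sub_eq_zero.mp hz⟩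
  · rw [Set.ncard_setOf_fst_eq (fun p : F × F => p.1 ^ 2 + a * p.2 ^ 2), Nat.card_prod,
      Nat.card_eq_fintype_card, sq]

/-- The elliptic paraboloid construction: let `F` be a finite field of odd
characteristic and `a ∈ F^×` with `-a` a non-square. For `P = {(y²+az², y, z)}`
and planes `π_{(x₀,y₀,z₀)} : x - 2y₀y - 2az₀z = -y₀² - az₀²`, each point of `P`
lies on its own plane, each plane meets `P` only at its own point, and
`|P| = q²`; hence the pairs `(p, π_p)` form an induced matching of size `q²` in
the point–plane incidence graph of `F³`. -/
theorem stmt_18 (F : Type*) [Field F] [Fintype F] (hchar : ringChar F ≠ 2)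
    (a : F) (ha : a ≠ 0) (hns : ∀ s : F, -a ≠ s ^ 2) :
    (∀ y0 z0 : F,
      (y0 ^ 2 + a * z0 ^ 2) - 2 * y0 * y0 - 2 * a * z0 * z0 = -(y0 ^ 2 + a * z0 ^ 2)) ∧
    (∀ y0 z0 y z : F,
      (y ^ 2 + a * z ^ 2) - 2 * y0 * y - 2 * a * z0 * z = -(y0 ^ 2 + a * z0 ^ 2) →
      y = y0 ∧ z = z0) ∧
    Set.ncard {v : F × F × F | v.1 = v.2.1 ^ 2 + a * v.2.2 ^ 2} = Fintype.card F ^ 2 :=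
  stmt_18_general F a hns
end

section
/- Let q be a prime power and let N ⊂ F_q² be a Nikodym set. For each v ∈ F_q² fix a line ℓ_v through v whose punctured part lies in N, identify F_q² with the affine points of PG(2,q), and let L₀ = {ℓ_v : v ∈ F_q²} ∪ {ℓ_∞}. Then L₀ covers PG(2,q), for every v ∉ N the only line of L₀ containing v is ℓ_v, and hence any minimal subcover L ⊆ L₀ satisfies |L| ≥ q² - |N|. Consequently, the maximum size B(2,q) of a minimal line cover of PG(2,q) satisfies B(2,q) ≥ q² - Nikodym(2,q). -/
/-- Incidence in `PG(2,q)`: a point and a line (both represented as elements of the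
projectivization of `F³`, a line via the coefficients of its equation) are
incident iff the dot product of representatives vanishes (a scaling-invariant
condition). -/
def pgIncid (F : Type*) [Field F] (pt l : Projectivization F (Fin 3 → F)) : Prop :=
  ∑ i, pt.rep i * l.rep i = 0

/-- A family of lines covers `PG(2,q)` if every projective point lies on one of them. -/
def pgCovers (F : Type*) [Field F] (L : Set (Projectivization F (Fin 3 → F))) : Prop :=
  ∀ pt : Projectivization F (Fin 3 → F), ∃ l ∈ L, pgIncid F pt l

/-! Extend the Nikodym lines `ℓ_x` (`x ∈ F²`) by the line at infinity to a cover of `PG(2,F)`.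
A point `y ∉ N` lies on `ℓ_y` and on no other line of this cover: a line `ℓ_x` through `y ≠ x`
would put `y` on the punctured part of `ℓ_x`, inside `N`. So every subcover contains the
`|F²| - |N|` distinct lines `ℓ_y`, `y ∉ N`, and in particular so does a minimal one, which
exists since there are finitely many lines. -/

open Projectivization
open scoped LinearAlgebra.Projectivization

section Incidence

variable {F : Type*} [Field F]

lemma pgIncid_mk_iff (p a : Fin 3 → F) (hp : p ≠ 0) (ha : a ≠ 0) :
    pgIncid F (mk F p hp) (mk F a ha) ↔ ∑ i, p i * a i = 0 := by
  obtain ⟨c, hc⟩ := exists_smul_eq_mk_rep F p hp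
  obtain ⟨d, hd⟩ := exists_smul_eq_mk_rep F a ha
  have hscale : ∑ i, (c • p) i * (d • a) i = (c * d : F) * ∑ i, p i * a i := by
    simp only [Finset.mul_sum, Pi.smul_apply, Units.smul_def, smul_eq_mul]
    exact Finset.sum_congr rfl fun i _ => by ring
  rw [pgIncid, ← hc, ← hd, hscale]
  simp [c.ne_zero, d.ne_zero]

lemma exists_eq_smul_iff_sub_mul_eq_zero {v : Fin 2 → F} (hv : v ≠ 0) (w : Fin 2 → F) :
    (∃ t : F, w = t • v) ↔ w 0 * v 1 - w 1 * v 0 = 0 := by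
  refine ⟨fun ⟨t, ht⟩ => by simp only [ht, Pi.smul_apply, smul_eq_mul]; ring, fun h => ?_⟩
  by_cases h0 : v 0 = 0
  · have h1 : v 1 ≠ 0 := fun h1 => hv (funext fun i => by fin_cases i <;> assumption)
    refine ⟨w 1 / v 1, funext fun i => ?_⟩
    fin_cases i
    · have : w 0 * v 1 = 0 := by linear_combination h + w 1 * h0
      simp [h0, (mul_eq_zero.1 this).resolve_right h1]
    · simp [h1]
  · refine ⟨w 0 / v 0, funext fun i => ?_⟩
    fin_cases i
    · simp [h0]
    · simp only [Fin.mk_one, Pi.smul_apply, smul_eq_mul]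
      field_simp
      linear_combination -h

lemma affine_coords_ne_zero (x : Fin 2 → F) : ![x 0, x 1, 1] ≠ 0 :=
  fun h => by simpa using congrFun h 2

lemma line_coeffs_ne_zero (x : Fin 2 → F) {v : Fin 2 → F} (hv : v ≠ 0) :
    ![v 1, -v 0, v 0 * x 1 - v 1 * x 0] ≠ 0 := fun h => by
  have h0 : v 1 = 0 := by simpa using congrFun h 0
  have h1 : v 0 = 0 := by simpa using congrFun h 1
  exact hv (funext fun i => by fin_cases i <;> assumption)

def affinePoint (x : Fin 2 → F) : ℙ F (Fin 3 → F) :=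
  mk F ![x 0, x 1, 1] (affine_coords_ne_zero x)

/-- The line `{x + t • v}` together with its point at infinity `[v 0 : v 1 : 0]`. -/
def affineLine (x : Fin 2 → F) {v : Fin 2 → F} (hv : v ≠ 0) : ℙ F (Fin 3 → F) :=
  mk F ![v 1, -v 0, v 0 * x 1 - v 1 * x 0] (line_coeffs_ne_zero x hv)

def lineAtInfinity : ℙ F (Fin 3 → F) :=
  mk F ![0, 0, 1] (by simp)

lemma pgIncid_affinePoint_affineLine_iff (y x : Fin 2 → F) {v : Fin 2 → F} (hv : v ≠ 0) :
    pgIncid F (affinePoint y) (affineLine x hv) ↔ ∃ t : F, y = x + t • v := by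
  have hsum : ∑ i, ![y 0, y 1, 1] i * ![v 1, -v 0, v 0 * x 1 - v 1 * x 0] i =
      (y - x) 0 * v 1 - (y - x) 1 * v 0 := by
    simp [Fin.sum_univ_three]; ring
  simp_rw [affinePoint, affineLine, pgIncid_mk_iff, hsum, ← exists_eq_smul_iff_sub_mul_eq_zero hv,
    sub_eq_iff_eq_add']

lemma pgIncid_affinePoint_affineLine_self (x : Fin 2 → F) {v : Fin 2 → F} (hv : v ≠ 0) :
    pgIncid F (affinePoint x) (affineLine x hv) :=
  (pgIncid_affinePoint_affineLine_iff x x hv).2 ⟨0, by simp⟩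

lemma not_pgIncid_affinePoint_lineAtInfinity (x : Fin 2 → F) :
    ¬ pgIncid F (affinePoint x) lineAtInfinity := by
  simp [affinePoint, lineAtInfinity, pgIncid_mk_iff, Fin.sum_univ_three]

lemma exists_eq_affinePoint_or_pgIncid_lineAtInfinity (pt : ℙ F (Fin 3 → F)) :
    (∃ x, pt = affinePoint x) ∨ pgIncid F pt lineAtInfinity := by
  induction pt using Projectivization.ind with
  | h p hp =>
  by_cases h2 : p 2 = 0
  · right
    simp [lineAtInfinity, pgIncid_mk_iff, Fin.sum_univ_three, h2]
  · left
    refine ⟨![p 0 / p 2, p 1 / p 2], (mk_eq_mk_iff _ _ _ _ _).2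
      ⟨Units.mk0 (p 2) h2, funext fun i => ?_⟩⟩
    fin_cases i <;> simp [Units.smul_def, h2, mul_div_cancel₀]

end Incidence

section Nikodym

variable {F : Type*} [Field F] {N : Set (Fin 2 → F)}

lemma eq_of_pgIncid_affineLine_of_not_mem {x y v : Fin 2 → F} (hv : v ≠ 0)
    (hN : ∀ t : F, t ≠ 0 → x + t • v ∈ N) (hy : y ∉ N)
    (h : pgIncid F (affinePoint y) (affineLine x hv)) : y = x := by
  obtain ⟨t, rfl⟩ := (pgIncid_affinePoint_affineLine_iff y x hv).1 h
  by_cases ht : t = 0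
  · simp [ht]
  · exact absurd (hN t ht) hy

variable (v : (Fin 2 → F) → Fin 2 → F) (hv : ∀ x, v x ≠ 0)

def nikodymCover : Set (ℙ F (Fin 3 → F)) :=
  insert lineAtInfinity (Set.range fun x => affineLine x (hv x))

lemma pgCovers_nikodymCover : pgCovers F (nikodymCover v hv) := by
  intro pt
  rcases exists_eq_affinePoint_or_pgIncid_lineAtInfinity pt with ⟨x, rfl⟩ | h
  · exact ⟨_, Set.mem_insert_of_mem _ ⟨x, rfl⟩, pgIncid_affinePoint_affineLine_self x (hv x)⟩
  · exact ⟨_, Set.mem_insert _ _, h⟩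

variable {v hv}

lemma affineLine_mem_of_pgCovers (hN : ∀ x, ∀ t : F, t ≠ 0 → x + t • v x ∈ N)
    {L : Set (ℙ F (Fin 3 → F))} (hsub : L ⊆ nikodymCover v hv) (hL : pgCovers F L)
    {y : Fin 2 → F} (hy : y ∉ N) : affineLine y (hv y) ∈ L := by
  obtain ⟨l, hlL, hyl⟩ := hL (affinePoint y)
  rcases hsub hlL with rfl | ⟨x, rfl⟩
  · exact absurd hyl (not_pgIncid_affinePoint_lineAtInfinity y)
  · rwa [eq_of_pgIncid_affineLine_of_not_mem (hv x) (hN x) hy hyl]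

lemma ncard_compl_le_of_pgCovers [Finite F] (hN : ∀ x, ∀ t : F, t ≠ 0 → x + t • v x ∈ N)
    {L : Set (ℙ F (Fin 3 → F))} (hsub : L ⊆ nikodymCover v hv) (hL : pgCovers F L) :
    Nᶜ.ncard ≤ L.ncard := by
  have hinj : Set.InjOn (fun y => affineLine y (hv y)) Nᶜ := fun y hy y' _ hyy' => by
    have hy' := pgIncid_affinePoint_affineLine_self y (hv y)
    rw [show affineLine y (hv y) = affineLine y' (hv y') from hyy'] at hy'
    exact eq_of_pgIncid_affineLine_of_not_mem (hv y') (hN y') hy hy'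
  rw [← hinj.ncard_image]
  exact Set.ncard_le_ncard
    (Set.image_subset_iff.2 fun y hy => affineLine_mem_of_pgCovers hN hsub hL hy) (Set.toFinite L)

end Nikodym

/-- Minimal covers from Nikodym sets: if `N ⊆ F_q²` is a Nikodym set (through every
point `v` there is a line whose punctured part lies in `N`), then there is a
minimal line cover `L` of `PG(2,q)` with `|L| ≥ q² - |N|`. Consequently
`B(2,q) ≥ q² - Nikodym(2,q)`. -/
theorem stmt_19 (F : Type*) [Field F] [Fintype F]
    (N : Set (Fin 2 → F))
    (hN : ∀ x : Fin 2 → F, ∃ v : Fin 2 → F, v ≠ 0 ∧ ∀ t : F, t ≠ 0 → x + t • v ∈ N) :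
    ∃ L : Set (Projectivization F (Fin 3 → F)),
      pgCovers F L ∧ (∀ L' ⊆ L, pgCovers F L' → L' = L) ∧
      Fintype.card F ^ 2 - N.ncard ≤ L.ncard := by
  choose v hv hN using hN
  obtain ⟨L, hsub, hmin⟩ :=
    exists_minimal_le_of_wellFoundedLT (pgCovers F) _ (pgCovers_nikodymCover v hv)
  refine ⟨L, hmin.prop, fun L' hL' hcov => hL'.antisymm (hmin.le_of_le hcov hL'), ?_⟩
  calc Fintype.card F ^ 2 - N.ncard = Nᶜ.ncard := by
        rw [Set.ncard_compl, Nat.card_eq_fintype_card, Fintype.card_fun, Fintype.card_fin]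
    _ ≤ L.ncard := ncard_compl_le_of_pgCovers hN hsub hmin.prop
end
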